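/- arXiv:1107.2406 — 2 statements merged into one kernel-verified Lean document; each statement's English description precedes it below -/
import Mathlib

section
/- Let N ≥ 1, P₀,...,P_N ∈ K[z], and a ∈ K⟦z⟧ with ∑_{n=0}^N P_n aⁿ = 0 and C := ∑_{n=1}^N n P_n(0) a(0)^{n-1} ≠ 0. Then for every J ≥ 1, the coefficient a_J satisfies the recursion a_J = −D_J / C, where D_J is the coefficient of z^J in ∑_{n=0}^N P_n(z) (∑_{j=0}^{J-1} a_j z^j)ⁿ. -/
/-!
Write `a = t + X^J s` with `t` the truncation of `a` below degree `J`, so that `s(0) = a_J`.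
Then `a^n - t^n = X^J s · ∑ a^i t^(n-1-i)`, and since `a ≡ t mod X` the coefficient of `z^J`
in `P_n a^n - P_n t^n` is `n P_n(0) a(0)^(n-1) a_J`. Summing over `n`, the coefficient of `z^J`
in `∑ P_n a^n = 0` is `D_J + C a_J`.
-/

namespace PowerSeries

variable {R : Type*}

theorem coeff_mul_of_X_pow_dvd [CommSemiring R] {f : R⟦X⟧} (g : R⟦X⟧) {J : ℕ}
    (hf : X ^ J ∣ f) : coeff J (f * g) = coeff J f * constantCoeff g := by
  obtain ⟨s, rfl⟩ := hf
  rw [mul_assoc, coeff_X_pow_mul', coeff_X_pow_mul', if_pos le_rfl, if_pos le_rfl, Nat.sub_self,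
    coeff_zero_eq_constantCoeff_apply, coeff_zero_eq_constantCoeff_apply, map_mul]

theorem X_pow_dvd_sub_trunc [CommRing R] (a : R⟦X⟧) (J : ℕ) :
    X ^ J ∣ a - (a.trunc J : R⟦X⟧) :=
  X_pow_dvd_iff.mpr fun m hm => by
    rw [map_sub, Polynomial.coeff_coe, coeff_trunc, if_pos hm, sub_self]

theorem coeff_trunc_self [CommSemiring R] (a : R⟦X⟧) (J : ℕ) :
    coeff J (a.trunc J : R⟦X⟧) = 0 := by
  rw [Polynomial.coeff_coe, coeff_trunc, if_neg (lt_irrefl J)]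

theorem constantCoeff_eq_of_X_pow_dvd_sub [CommRing R] {a b : R⟦X⟧} {J : ℕ} (hJ : J ≠ 0)
    (h : X ^ J ∣ a - b) : constantCoeff a = constantCoeff b := by
  rw [← sub_eq_zero, ← map_sub, ← X_dvd_iff]
  exact (dvd_pow_self X hJ).trans h

theorem coeff_mul_pow_sub_of_X_pow_dvd_sub [CommRing R] (Q : R⟦X⟧) {a b : R⟦X⟧} {J : ℕ}
    (hJ : J ≠ 0) (h : X ^ J ∣ a - b) (n : ℕ) :
    coeff J (Q * a ^ n) - coeff J (Q * b ^ n) =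
      n * constantCoeff Q * constantCoeff b ^ (n - 1) * coeff J (a - b) := by
  have hab := constantCoeff_eq_of_X_pow_dvd_sub hJ h
  have hgeom : constantCoeff (∑ i ∈ Finset.range n, a ^ i * b ^ (n - 1 - i)) =
      n * constantCoeff b ^ (n - 1) := by
    rw [RingHom.map_geom_sum₂, hab, geom_sum₂_self]
  have hfactor : Q * a ^ n - Q * b ^ n =
      (a - b) * (Q * ∑ i ∈ Finset.range n, a ^ i * b ^ (n - 1 - i)) := by
    rw [← mul_sub, ← geom_sum₂_mul]; ring
  rw [← map_sub, hfactor, coeff_mul_of_X_pow_dvd _ h, map_mul, hgeom]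
  ring

end PowerSeries

theorem coefficient_recursion_general (K : Type*) [Field K] (N : ℕ)
    (P : ℕ → Polynomial K) (a : PowerSeries K)
    (ha : ∑ n ∈ Finset.range (N + 1), (P n : PowerSeries K) * a ^ n = 0)
    (C : K)
    (hC : C = ∑ n ∈ Finset.range (N + 1),
      (n : K) * (P n).coeff 0 * (PowerSeries.constantCoeff a) ^ (n - 1))
    (hCne : C ≠ 0) :
    ∀ J, 1 ≤ J → PowerSeries.coeff J a =
      -(PowerSeries.coeff J
        (∑ n ∈ Finset.range (N + 1),
          (P n : PowerSeries K) * ((a.trunc J : Polynomial K) : PowerSeries K) ^ n)) / C := by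
  intro J hJ
  set t : PowerSeries K := ((a.trunc J : Polynomial K) : PowerSeries K)
  have hJ0 : J ≠ 0 := Nat.one_le_iff_ne_zero.mp hJ
  have hat := PowerSeries.X_pow_dvd_sub_trunc a J
  have hexpand (n : ℕ) : PowerSeries.coeff J ((P n : PowerSeries K) * a ^ n) =
      PowerSeries.coeff J ((P n : PowerSeries K) * t ^ n) +
        n * (P n).coeff 0 * PowerSeries.constantCoeff a ^ (n - 1) * PowerSeries.coeff J a := by
    rw [← sub_eq_iff_eq_add', PowerSeries.coeff_mul_pow_sub_of_X_pow_dvd_sub _ hJ0 hat,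
      ← PowerSeries.constantCoeff_eq_of_X_pow_dvd_sub hJ0 hat, map_sub,
      PowerSeries.coeff_trunc_self, sub_zero, Polynomial.constantCoeff_coe]
  have hsum := congrArg (PowerSeries.coeff J) ha
  rw [map_sum, map_zero, Finset.sum_congr rfl fun n _ => hexpand n, Finset.sum_add_distrib,
    ← Finset.sum_mul, ← hC] at hsum
  rw [map_sum, eq_div_iff hCne]
  linear_combination hsum

theorem coefficient_recursion (K : Type*) [Field K] (N : ℕ) (hN : 1 ≤ N)
    (P : ℕ → Polynomial K) (a : PowerSeries K)
    (ha : ∑ n ∈ Finset.range (N + 1), (P n : PowerSeries K) * a ^ n = 0)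
    (C : K)
    (hC : C = ∑ n ∈ Finset.range (N + 1),
      (n : K) * (P n).coeff 0 * (PowerSeries.constantCoeff a) ^ (n - 1))
    (hCne : C ≠ 0) :
    ∀ J, 1 ≤ J → PowerSeries.coeff J a =
      -(PowerSeries.coeff J
        (∑ n ∈ Finset.range (N + 1),
          (P n : PowerSeries K) * ((a.trunc J : Polynomial K) : PowerSeries K) ^ n)) / C :=
  coefficient_recursion_general K N P a ha C hC hCne
end

section
/- Let P₀, P₁, P₂ be polynomials of degree ≤ 1 with coefficients p_{n,j}, and let f ∈ K⟦z⟧ with coefficients f_j satisfy P₀ + P₁ f + P₂ f² ≡ 0 mod z⁵ and p_{1,0} + 2 p_{2,0} f₀ ≠ 0. Let a be the power series root of P₀ + P₁ Y + P₂ Y² = 0 with a(0) = f₀. Then a_5 = −( p_{1,1} f₄ + p_{2,1}(2 f₀ f₄ + 2 f₁ f₃ + f₂²) + p_{2,0}(2 f₁ f₄ + 2 f₂ f₃) ) / ( p_{1,0} + 2 p_{2,0} f₀ ). -/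
/-!
Writing `F(Y) = P₀ + P₁ Y + P₂ Y²`, one has `F(a) - F(f) = (a - f) (P₁ + P₂ (a + f))`, and the second
factor has constant term `p_{1,0} + 2 p_{2,0} f₀`, so it is a unit of `K⟦z⟧`. Hence `F(f) ≡ 0 mod z⁵`
forces `a ≡ f mod z⁵`. Since the `Pₙ` have degree at most one, the coefficient of `z⁵` in `F(a) = 0`
involves `a₅` only through `(p_{1,0} + 2 p_{2,0} f₀) a₅`, and otherwise only `a₀, …, a₄ = f₀, …, f₄`.
-/

open PowerSeries

namespace PowerSeries

variable {R : Type*}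

theorem X_pow_dvd_sub_of_quadratic_root [CommRing R] {n : ℕ} {P₀ P₁ P₂ : Polynomial R}
    {f a : R⟦X⟧}
    (hf : X ^ n ∣ (P₀ : R⟦X⟧) + (P₁ : R⟦X⟧) * f + (P₂ : R⟦X⟧) * f ^ 2)
    (ha : (P₀ : R⟦X⟧) + (P₁ : R⟦X⟧) * a + (P₂ : R⟦X⟧) * a ^ 2 = 0)
    (ha0 : constantCoeff a = constantCoeff f)
    (hunit : IsUnit (P₁.coeff 0 + 2 * P₂.coeff 0 * constantCoeff f)) :
    X ^ n ∣ a - f := by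
  have hderiv : IsUnit ((P₁ : R⟦X⟧) + P₂ * (a + f)) := by
    rw [isUnit_iff_constantCoeff]
    convert hunit using 1
    simp only [map_add, map_mul, Polynomial.constantCoeff_coe, ha0]
    ring
  have hfactor : (a - f) * ((P₁ : R⟦X⟧) + P₂ * (a + f)) =
      -((P₀ : R⟦X⟧) + (P₁ : R⟦X⟧) * f + (P₂ : R⟦X⟧) * f ^ 2) := by
    linear_combination ha
  rw [← hderiv.dvd_mul_right, hfactor]
  exact hf.neg_right

theorem coeff_succ_coe_mul_of_natDegree_le_one [Semiring R] {P : Polynomial R}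
    (hP : P.natDegree ≤ 1) (n : ℕ) (g : R⟦X⟧) :
    coeff (n + 1) ((P : R⟦X⟧) * g) = P.coeff 0 * coeff (n + 1) g + P.coeff 1 * coeff n g := by
  conv_lhs => rw [Polynomial.eq_X_add_C_of_natDegree_le_one hP]
  simp only [Polynomial.coe_add, Polynomial.coe_mul, Polynomial.coe_C, Polynomial.coe_X, add_mul,
    map_add, mul_assoc, coeff_C_mul, coeff_succ_X_mul, add_comm]

end PowerSeries

theorem example1_a5 (K : Type*) [Field K]
    (P₀ P₁ P₂ : Polynomial K)
    (h0 : P₀.natDegree ≤ 1) (h1 : P₁.natDegree ≤ 1) (h2 : P₂.natDegree ≤ 1)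
    (f : PowerSeries K)
    (horder : ∀ m < 5, PowerSeries.coeff m
      ((P₀ : PowerSeries K) + (P₁ : PowerSeries K) * f + (P₂ : PowerSeries K) * f ^ 2) = 0)
    (hden : P₁.coeff 0 + 2 * P₂.coeff 0 * PowerSeries.coeff 0 f ≠ 0)
    (a : PowerSeries K)
    (ha0 : PowerSeries.constantCoeff a = PowerSeries.coeff 0 f)
    (ha : (P₀ : PowerSeries K) + (P₁ : PowerSeries K) * a + (P₂ : PowerSeries K) * a ^ 2 = 0) :
    PowerSeries.coeff 5 a =
      -(P₁.coeff 1 * PowerSeries.coeff 4 f +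
          P₂.coeff 1 * (2 * PowerSeries.coeff 0 f * PowerSeries.coeff 4 f +
            2 * PowerSeries.coeff 1 f * PowerSeries.coeff 3 f +
            (PowerSeries.coeff 2 f) ^ 2) +
          P₂.coeff 0 * (2 * PowerSeries.coeff 1 f * PowerSeries.coeff 4 f +
            2 * PowerSeries.coeff 2 f * PowerSeries.coeff 3 f)) /
        (P₁.coeff 0 + 2 * P₂.coeff 0 * PowerSeries.coeff 0 f) := by
  rw [coeff_zero_eq_constantCoeff_apply] at hden ha0 ⊢
  have hagree : ∀ m < 5, coeff m a = coeff m f := by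
    have := X_pow_dvd_sub_of_quadratic_root (X_pow_dvd_iff.mpr horder) ha ha0 hden.isUnit
    simpa only [X_pow_dvd_iff, map_sub, sub_eq_zero] using this
  have h5 := congrArg (coeff 5) ha
  rw [map_add, map_add, coeff_succ_coe_mul_of_natDegree_le_one h1,
    coeff_succ_coe_mul_of_natDegree_le_one h2, Polynomial.coeff_coe,
    Polynomial.coeff_eq_zero_of_natDegree_lt (by omega : P₀.natDegree < 5), map_zero] at h5
  simp only [sq, coeff_mul, Finset.Nat.sum_antidiagonal_eq_sum_range_succ_mk,
    Finset.sum_range_succ, Finset.sum_range_zero, zero_add, Nat.reduceAdd, Nat.reduceSub,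
    coeff_zero_eq_constantCoeff_apply,
    ha0, hagree 1 (by norm_num), hagree 2 (by norm_num), hagree 3 (by norm_num),
    hagree 4 (by norm_num)] at h5
  rw [eq_div_iff hden]
  linear_combination h5
end
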